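/- Let x₁ = (3/4)(1,1,1), x₂ = (3/4)(1,−1,−1), x₃ = (3/4)(−1,1,−1), x₄ = (3/4)(−1,−1,1) in ℝ³ and r = 1/2, and define the inversion maps g_j(x) = x_j + r²(x − x_j)/|x − x_j|² for x ≠ x_j. Then the four closed balls B̄(x_j, r) are pairwise disjoint (the distance between any two centers equals 3√2/2, so any two balls are separated by 3√2/2 − 1 > 0), and for all i ≠ j in {1,2,3,4}, g_j maps the closed ball B̄(x_i, r) into the open ball B(x_j, r). -/

import Mathlib

/-! Each `g_j` is the inversion in the sphere of radius `1/2` about `x_j`, which sends a point at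
distance `d` from `x_j` to one at distance `(1/2)²/d`. A point of `B̄(x_i, 1/2)` lies at distance
at least `3√2/2 − 1/2 > 1/2` from `x_j`, so its image lies at distance `< 1/2`. -/

open Metric

/-- Centers of the four Schottky spheres: the vertices of a regular tetrahedron scaled
by `3/4`. -/
noncomputable def schottky3DCenter : Fin 4 → EuclideanSpace ℝ (Fin 3) :=
  ![(3/4 : ℝ) • (WithLp.toLp 2 (![1, 1, 1] : Fin 3 → ℝ) : EuclideanSpace ℝ (Fin 3)),
    (3/4 : ℝ) • (WithLp.toLp 2 (![1, -1, -1] : Fin 3 → ℝ) : EuclideanSpace ℝ (Fin 3)),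
    (3/4 : ℝ) • (WithLp.toLp 2 (![-1, 1, -1] : Fin 3 → ℝ) : EuclideanSpace ℝ (Fin 3)),
    (3/4 : ℝ) • (WithLp.toLp 2 (![-1, -1, 1] : Fin 3 → ℝ) : EuclideanSpace ℝ (Fin 3))]

/-- The inversion map `g_j(x) = x_j + r²(x − x_j)/|x − x_j|²` with `r = 1/2`. -/
noncomputable def schottky3DMap (j : Fin 4) (x : EuclideanSpace ℝ (Fin 3)) :
    EuclideanSpace ℝ (Fin 3) :=
  schottky3DCenter j +
    (((1/2 : ℝ) ^ 2) / ‖x - schottky3DCenter j‖ ^ 2) • (x - schottky3DCenter j)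

theorem EuclideanGeometry.mapsTo_inversion_closedBall_ball {V P : Type*} [NormedAddCommGroup V]
    [InnerProductSpace ℝ V] [MetricSpace P] [NormedAddTorsor V P] {c c' : P} {R s : ℝ}
    (hR : 0 < R) (h : R + s < dist c' c) :
    Set.MapsTo (inversion c R) (closedBall c' s) (ball c R) := by
  intro x hx
  have hxc : R < dist x c := by
    linarith [dist_triangle c' x c, dist_comm x c', mem_closedBall.mp hx]
  rw [mem_ball, dist_inversion_center, div_lt_iff₀ (hR.trans hxc), sq]
  exact mul_lt_mul_of_pos_left hxc hR

theorem schottky3DMap_eq_inversion (j : Fin 4) :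
    schottky3DMap j = EuclideanGeometry.inversion (schottky3DCenter j) (1/2) := by
  ext1 x
  rw [schottky3DMap, EuclideanGeometry.inversion, ← dist_eq_norm, div_pow (1/2 : ℝ), vsub_eq_sub,
    vadd_eq_add, add_comm]

theorem dist_schottky3DCenter {i j : Fin 4} (hij : i ≠ j) :
    dist (schottky3DCenter i) (schottky3DCenter j) = 3 * √2 / 2 := by
  have h92 : (3 * √2 / 2) * (3 * √2 / 2) = 9 / 2 := by
    ring_nf; rw [Real.sq_sqrt zero_le_two]; norm_num
  rw [EuclideanSpace.dist_eq, Real.sqrt_eq_iff_mul_self_eq_of_pos (by positivity), h92]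
  fin_cases i <;> fin_cases j <;> first
    | exact absurd rfl hij
    | simp [schottky3DCenter, Fin.sum_univ_three, Real.dist_eq]; norm_num

theorem one_lt_three_mul_sqrt_two_div_two : 1 < 3 * √2 / 2 := by
  have : 2 / 3 < √2 := Real.lt_sqrt (by norm_num) |>.mpr (by norm_num)
  linarith

/-- The distance between any two of the four centers equals `3√2/2`, the separation
`3√2/2 − 1` is positive, the four closed balls `B̄(x_j, 1/2)` are pairwise disjoint, and
for `i ≠ j` the inversion `g_j` maps `B̄(x_i, 1/2)` into the open ball `B(x_j, 1/2)`. -/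
theorem schottky3D_disjoint_and_mapsTo :
    (∀ i j : Fin 4, i ≠ j →
      dist (schottky3DCenter i) (schottky3DCenter j) = 3 * Real.sqrt 2 / 2) ∧
    0 < 3 * Real.sqrt 2 / 2 - 1 ∧
    (∀ i j : Fin 4, i ≠ j →
      Disjoint (closedBall (schottky3DCenter i) (1/2))
        (closedBall (schottky3DCenter j) (1/2))) ∧
    (∀ i j : Fin 4, i ≠ j →
      Set.MapsTo (schottky3DMap j) (closedBall (schottky3DCenter i) (1/2))
        (ball (schottky3DCenter j) (1/2))) := by
  have hsep := one_lt_three_mul_sqrt_two_div_two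
  refine ⟨fun _ _ ↦ dist_schottky3DCenter, by linarith, fun i j hij ↦ ?_, fun i j hij ↦ ?_⟩
  · exact closedBall_disjoint_closedBall (by rw [dist_schottky3DCenter hij]; linarith)
  · rw [schottky3DMap_eq_inversion]
    exact EuclideanGeometry.mapsTo_inversion_closedBall_ball (by norm_num)
      (by rw [dist_schottky3DCenter hij]; linarith)
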